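/- arXiv:2304.10002 — 4 statements merged into one kernel-verified Lean document; each statement's English description precedes it below -/
import Mathlib

section
/- Let (N,K,C,T) be a generalized highway problem with a partition P = {P_1,…,P_A} of N into a priori unions, with c the associated cost game. Then the Owen value of player i in union P_a equals Σ_{t ∈ T(i)} C(t)/(|𝒜_t|·|N_t^a|), where 𝒜_t is the set of unions containing some agent that uses section t and N_t^a = {j ∈ P_a : t ∈ T(j)}. -/
/-!
The marginal cost of `i` joining a coalition `X` is the total cost of the sections of `T i` that
`X` does not use, so the Owen value splits section by section. For a section `t` the Owen
weights factorize: the union part sums to the probability that, in a random order of the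
unions, `a` comes before every other union using `t`, and the player part to the probability
that, in a random order of `P a`, `i` comes before every other member of `P a` using `t`;
these are `1/|𝒜_t|` and `1/|N_t^a|`. Both come from `∑_{H ⊆ U} w n |H| = 1/(n-|U|)` for the
weights `w n k = 1/(n·C(n-1,k))`, by induction on `U` from `w n k + w n (k+1) = w (n-1) k`.
-/

open Finset

/-- The probability that, in a uniformly random order of `n` players, the predecessors of a
fixed player form a given set of `k` players. -/
noncomputable def shapleyWeight (n k : ℕ) : ℝ := ((n : ℝ) * (n - 1).choose k)⁻¹

lemma shapleyWeight_add_shapleyWeight_succ {m k : ℕ} (hk : k ≤ m) :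
    shapleyWeight (m + 2) k + shapleyWeight (m + 2) (k + 1) = shapleyWeight (m + 1) k := by
  have ha : ((m.choose k * (m + 1) : ℕ) : ℝ) = ((m + 1).choose k * (m + 1 - k) : ℕ) :=
    congrArg _ (Nat.choose_mul_succ_eq m k)
  have hb : (((m + 1) * m.choose k : ℕ) : ℝ) = ((m + 1).choose (k + 1) * (k + 1) : ℕ) :=
    congrArg _ (Nat.add_one_mul_choose_eq m k)
  push_cast [Nat.cast_sub (by omega : k ≤ m + 1)] at ha hb
  have hc0 : (m.choose k : ℝ) ≠ 0 := by exact_mod_cast (Nat.choose_pos hk).ne'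
  have ha0 : ((m + 1).choose k : ℝ) ≠ 0 := by exact_mod_cast (Nat.choose_pos (by omega)).ne'
  have hb0 : ((m + 1).choose (k + 1) : ℝ) ≠ 0 := by exact_mod_cast (Nat.choose_pos (by omega)).ne'
  simp only [shapleyWeight, Nat.add_sub_cancel]
  push_cast
  field_simp
  linear_combination ((m + 1).choose (k + 1) : ℝ) * ha + ((m + 1).choose k : ℝ) * hb

lemma sum_powerset_shapleyWeight {α : Type*} [DecidableEq α] {U : Finset α} {n : ℕ}
    (hn : #U < n) : ∑ H ∈ U.powerset, shapleyWeight n #H = ((n - #U : ℕ) : ℝ)⁻¹ := by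
  induction U using Finset.induction_on generalizing n with
  | empty => simp [shapleyWeight]
  | insert x U hx ih =>
    rw [card_insert_of_notMem hx] at hn
    obtain ⟨m, rfl⟩ : ∃ m, n = m + 2 := ⟨n - 2, by omega⟩
    rw [sum_powerset_insert hx, ← sum_add_distrib]
    have hstep : ∀ H ∈ U.powerset,
        shapleyWeight (m + 2) #H + shapleyWeight (m + 2) #(insert x H)
          = shapleyWeight (m + 1) #H := fun H hH => by
      rw [card_insert_of_notMem fun hxH => hx (mem_powerset.1 hH hxH),
        shapleyWeight_add_shapleyWeight_succ ((card_le_card (mem_powerset.1 hH)).trans (by omega))]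
    rw [sum_congr rfl hstep, ih (by omega), card_insert_of_notMem hx]
    congr 2
    omega

lemma sum_powerset_ite_exists {α β : Type*} [DecidableEq α] [AddCommMonoid β] (U : Finset α)
    (q : α → Prop) [DecidablePred q] (f : Finset α → β) :
    ∑ H ∈ U.powerset, (if ∃ b ∈ H, q b then 0 else f H)
      = ∑ H ∈ (U.filter fun b => ¬ q b).powerset, f H := by
  have hfilter :
      (U.powerset.filter fun H => ¬ ∃ b ∈ H, q b) = (U.filter fun b => ¬ q b).powerset := by
    ext H
    simp only [mem_filter, mem_powerset, subset_iff, not_exists, not_and]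
    grind
  simp only [← hfilter, sum_filter, ite_not]

lemma sum_powerset_erase_ite_shapleyWeight {α : Type*} [DecidableEq α] {s : Finset α} {a : α}
    (q : α → Prop) [DecidablePred q] (ha : a ∈ s) (hqa : q a) :
    ∑ H ∈ (s.erase a).powerset, (if ∃ b ∈ H, q b then 0 else shapleyWeight #s #H)
      = (#(s.filter q) : ℝ)⁻¹ := by
  have hcompl : (s.erase a).filter (fun b => ¬ q b) = s.filter fun b => ¬ q b := by
    rw [filter_erase, erase_eq_of_notMem (by simp [hqa])]
  have hcard := card_filter_add_card_filter_not (s := s) (p := q)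
  have hpos : 0 < #(s.filter q) := card_pos.2 ⟨a, mem_filter.2 ⟨ha, hqa⟩⟩
  rw [sum_powerset_ite_exists, hcompl, sum_powerset_shapleyWeight (by omega)]
  congr 2
  omega

lemma sum_biUnion_insert_sub {N K β : Type*} [DecidableEq N] [DecidableEq K] [AddCommGroup β]
    (T : N → Finset K) (C : K → β) (X : Finset N) (i : N) :
    ∑ t ∈ (insert i X).biUnion T, C t - ∑ t ∈ X.biUnion T, C t
      = ∑ t ∈ T i, if t ∈ X.biUnion T then 0 else C t := by
  rw [biUnion_insert, union_comm, ← union_sdiff_self_eq_union, sum_union disjoint_sdiff,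
    sdiff_eq_filter, sum_filter]
  simp only [ite_not, add_sub_cancel_left]

lemma sum_powerset_sum_powerset_shapleyWeight_mul_ite {M N K : Type*} [Fintype M] [DecidableEq M]
    [DecidableEq N] [DecidableEq K] (P : M → Finset N) (T : N → Finset K) (x : ℝ) {a : M} {i : N}
    {t : K} (hi : i ∈ P a) (ht : t ∈ T i) :
    ∑ H ∈ (univ.erase a).powerset, ∑ S ∈ ((P a).erase i).powerset,
      shapleyWeight (Fintype.card M) #H * shapleyWeight #(P a) #S *
        (if t ∈ (H.biUnion P ∪ S).biUnion T then 0 else x)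
      = x / (#(univ.filter fun b => ∃ j ∈ P b, t ∈ T j) * #((P a).filter fun j => t ∈ T j)) := by
  have hsplit : ∀ H S, shapleyWeight (Fintype.card M) #H * shapleyWeight #(P a) #S *
        (if t ∈ (H.biUnion P ∪ S).biUnion T then 0 else x)
      = (if ∃ b ∈ H, ∃ j ∈ P b, t ∈ T j then 0 else shapleyWeight #(univ : Finset M) #H) *
        (if ∃ j ∈ S, t ∈ T j then 0 else shapleyWeight #(P a) #S) * x := by
    intro H S
    have hmem : t ∈ (H.biUnion P ∪ S).biUnion T ↔
        (∃ b ∈ H, ∃ j ∈ P b, t ∈ T j) ∨ ∃ j ∈ S, t ∈ T j := by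
      rw [union_biUnion, mem_union, biUnion_biUnion]
      simp only [mem_biUnion]
    rw [card_univ, if_congr hmem rfl rfl]
    split_ifs <;> simp_all
  simp_rw [hsplit, ← sum_mul, ← sum_mul_sum]
  rw [sum_powerset_erase_ite_shapleyWeight _ (mem_univ a) ⟨i, hi, ht⟩,
    sum_powerset_erase_ite_shapleyWeight (fun j => t ∈ T j) hi ht]
  field_simp

theorem owen_value_generalized_highway_general
    {N K M : Type*} [DecidableEq N] [DecidableEq K]
    [Fintype M] [DecidableEq M]
    (C : K → ℝ)
    (T : N → Finset K)
    (c : Finset N → ℝ) (hc : ∀ S : Finset N, c S = ∑ t ∈ S.biUnion T, C t)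
    (Pp : M → Finset N)
    (a : M) (i : N) (hi : i ∈ Pp a) :
    (∑ H ∈ ((Finset.univ : Finset M).erase a).powerset,
      ∑ S ∈ ((Pp a).erase i).powerset,
        (1 / (((Pp a).card * Fintype.card M : ℕ) : ℝ)) *
          (1 / (((Fintype.card M - 1).choose H.card *
                  ((Pp a).card - 1).choose S.card : ℕ) : ℝ)) *
          (c (H.biUnion Pp ∪ S ∪ {i}) - c (H.biUnion Pp ∪ S)))
      = ∑ t ∈ T i, C t /
          ((((Finset.univ : Finset M).filter (fun b => ∃ j ∈ Pp b, t ∈ T j)).card : ℝ) *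
            (((Pp a).filter (fun j => t ∈ T j)).card : ℝ)) := by
  have hweight : ∀ (H : Finset M) (S : Finset N),
      1 / ((#(Pp a) * Fintype.card M : ℕ) : ℝ) *
        (1 / (((Fintype.card M - 1).choose #H * (#(Pp a) - 1).choose #S : ℕ) : ℝ))
      = shapleyWeight (Fintype.card M) #H * shapleyWeight #(Pp a) #S := by
    intro H S
    simp only [shapleyWeight]
    push_cast
    ring
  simp_rw [hweight, hc, union_singleton, sum_biUnion_insert_sub, mul_sum]
  rw [sum_congr rfl fun H _ => sum_comm, sum_comm]
  exact sum_congr rfl fun t ht => sum_powerset_sum_powerset_shapleyWeight_mul_ite Pp T (C t) hi ht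

/-- The Owen value of a generalized highway game with a priori
unions is `Ψ_i = Σ_{t ∈ T(i)} C(t)/(|𝒜_t|·|N_t^a|)` for `i ∈ P_a`. -/
theorem owen_value_generalized_highway
    {N K M : Type*} [Fintype N] [DecidableEq N] [Fintype K] [DecidableEq K]
    [Fintype M] [DecidableEq M]
    (C : K → ℝ) (hC : ∀ t, 0 ≤ C t)
    (T : N → Finset K) (hT : ∀ i, (T i).Nonempty)
    (hK : ∀ t : K, ∃ i, t ∈ T i)
    (c : Finset N → ℝ) (hc : ∀ S : Finset N, c S = ∑ t ∈ S.biUnion T, C t)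
    (Pp : M → Finset N)
    (hdis : ∀ a b : M, a ≠ b → Disjoint (Pp a) (Pp b))
    (hcov : ∀ i : N, ∃ a : M, i ∈ Pp a)
    (hne : ∀ a : M, (Pp a).Nonempty)
    (a : M) (i : N) (hi : i ∈ Pp a) :
    (∑ H ∈ ((Finset.univ : Finset M).erase a).powerset,
      ∑ S ∈ ((Pp a).erase i).powerset,
        (1 / (((Pp a).card * Fintype.card M : ℕ) : ℝ)) *
          (1 / (((Fintype.card M - 1).choose H.card *
                  ((Pp a).card - 1).choose S.card : ℕ) : ℝ)) *
          (c (H.biUnion Pp ∪ S ∪ {i}) - c (H.biUnion Pp ∪ S)))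
      = ∑ t ∈ T i, C t /
          ((((Finset.univ : Finset M).filter (fun b => ∃ j ∈ Pp b, t ∈ T j)).card : ℝ) *
            (((Pp a).filter (fun j => t ∈ T j)).card : ℝ)) :=
  owen_value_generalized_highway_general C T c hc Pp a i hi
end

section
/- Let (N,K,C,T) be a generalized highway problem with partition P of N into unions, and (M, c_P) the quotient game. If every section is used by exactly one union, the Tijs value of union a in the quotient game equals c_P^e(a), the total cost of sections used only by union a. Otherwise it equals c_P^e(a) + c_P^s(M)·c_P^s(a)/Σ_{b∈M} c_P^s(b), where c_P^s(a) is the total cost of sections used by union a that are shared with other unions and c_P^s(M) the total cost of all union-shared sections. -/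
open Finset

/-! The quotient game is again a highway game, in which union `b` uses the sections
`U b = ⋃_{i ∈ P_b} T(i)`. Removing `b` from the grand coalition saves exactly its exclusive
sections, so its utopia payoff is `c_P^e(b)`; as costs are nonnegative, the remainder
`c(H) - Σ_{b' ∈ H \ {b}} c_P^e(b')` is smallest at `H = {b}`, so its lower payoff is
`c_P^e(b) + c_P^s(b)`. The Tijs value is therefore `c_P^e(a) + (1 - α) c_P^s(a)`, and efficiency,
`c(M) = Σ_b c_P^e(b) + c_P^s(M)`, forces `(1 - α) Σ_b c_P^s(b) = c_P^s(M)`. -/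

namespace HighwayGame

variable {M K : Type*} [Fintype M] [DecidableEq K]

def usageCount (U : M → Finset K) (t : K) : ℕ := #{b | t ∈ U b}

def cost (C : K → ℝ) (U : M → Finset K) (H : Finset M) : ℝ :=
  ∑ t ∈ H.biUnion U, C t

def exclusiveCost (C : K → ℝ) (U : M → Finset K) (b : M) : ℝ :=
  ∑ t ∈ (U b).filter (fun t => usageCount U t = 1), C t

def sharedCost (C : K → ℝ) (U : M → Finset K) (b : M) : ℝ :=
  ∑ t ∈ (U b).filter (fun t => 1 < usageCount U t), C t

variable {C : K → ℝ} {U : M → Finset K}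

theorem usageCount_pos_iff {t : K} : 0 < usageCount U t ↔ ∃ b, t ∈ U b := by
  simp [usageCount, card_pos, filter_nonempty_iff]

theorem usageCount_eq_one_iff {t : K} {b : M} (ht : t ∈ U b) :
    usageCount U t = 1 ↔ ∀ b', t ∈ U b' → b' = b := by
  have hpos : 0 < usageCount U t := usageCount_pos_iff.2 ⟨b, ht⟩
  rw [show usageCount U t = 1 ↔ usageCount U t ≤ 1 by omega, usageCount, card_le_one]
  simp only [mem_filter, mem_univ, true_and]
  exact ⟨fun h b' hb' => h b' hb' b ht,
    fun h b₁ h₁ b₂ h₂ => (h b₁ h₁).trans (h b₂ h₂).symm⟩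

theorem cost_eq_sum_exclusiveCost_add (H : Finset M) :
    cost C U H = ∑ b ∈ H, exclusiveCost C U b
      + ∑ t ∈ (H.biUnion U).filter (fun t => 1 < usageCount U t), C t := by
  rw [cost, ← sum_filter_add_sum_filter_not _ (fun t => usageCount U t = 1)]
  congr 1
  · rw [filter_biUnion, sum_biUnion]
    · rfl
    intro b _ b' _ hbb'
    rw [Function.onFun, disjoint_left]
    intro t ht ht'
    rw [mem_filter] at ht ht'
    exact hbb' ((usageCount_eq_one_iff ht'.1).1 ht'.2 b ht.1)
  · refine sum_congr (filter_congr fun t ht => ?_) fun _ _ => rfl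
    obtain ⟨b, -, htb⟩ := mem_biUnion.1 ht
    have := usageCount_pos_iff.2 ⟨b, htb⟩
    omega

theorem cost_univ_eq [Fintype K] :
    cost C U univ = ∑ b, exclusiveCost C U b
      + ∑ t ∈ univ.filter (fun t => 1 < usageCount U t), C t := by
  rw [cost_eq_sum_exclusiveCost_add]
  congr 2
  ext t
  simp only [mem_filter, mem_biUnion, mem_univ, true_and, and_iff_right_iff_imp]
  exact fun h => usageCount_pos_iff.1 (by omega)

theorem cost_univ_sub_cost_erase [DecidableEq M] (b : M) :
    cost C U univ - cost C U (univ.erase b) = exclusiveCost C U b := by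
  rw [cost, cost, exclusiveCost,
    ← sum_sdiff_eq_sub (biUnion_subset_biUnion_of_subset_left _ (erase_subset b univ))]
  congr 1
  ext t
  simp only [mem_sdiff, mem_biUnion, mem_univ, true_and, mem_erase, ne_eq, and_true,
    mem_filter, not_exists, not_and]
  constructor
  · rintro ⟨⟨b', htb'⟩, hnot⟩
    have hb' : b' = b := by_contra fun h => hnot b' h htb'
    subst hb'
    exact ⟨htb', (usageCount_eq_one_iff htb').2 fun b'' ht => by_contra fun h => hnot b'' h ht⟩
  · rintro ⟨htb, h1⟩
    exact ⟨⟨b, htb⟩, fun b'' hne ht => hne ((usageCount_eq_one_iff htb).1 h1 b'' ht)⟩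

theorem isLeast_cost_sub_sum_exclusiveCost [DecidableEq M] (hC : ∀ t, 0 ≤ C t) (b : M) :
    IsLeast {x | ∃ H : Finset M, b ∈ H ∧
        x = cost C U H - ∑ b' ∈ H.erase b, exclusiveCost C U b'}
      (exclusiveCost C U b + sharedCost C U b) := by
  refine ⟨⟨{b}, mem_singleton_self b, ?_⟩, ?_⟩
  · rw [erase_singleton, sum_empty, sub_zero, cost_eq_sum_exclusiveCost_add, sum_singleton,
      singleton_biUnion]
    rfl
  · rintro _ ⟨H, hbH, rfl⟩
    have hshared : sharedCost C U b
        ≤ ∑ t ∈ (H.biUnion U).filter (fun t => 1 < usageCount U t), C t :=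
      sum_le_sum_of_subset_of_nonneg (filter_subset_filter _ (subset_biUnion_of_mem U hbH))
        fun t _ _ => hC t
    rw [cost_eq_sum_exclusiveCost_add, ← add_sum_erase H _ hbH]
    linarith

theorem sharedCost_eq_zero [Fintype K]
    (h : univ.filter (fun t => 1 < usageCount U t) = ∅) (b : M) : sharedCost C U b = 0 := by
  rw [sharedCost, filter_eq_empty_iff.2 fun t _ => filter_eq_empty_iff.1 h (mem_univ t),
    sum_empty]

end HighwayGame

open HighwayGame in
theorem tijs_value_quotient_generalized_highway_general
    {N K M : Type*} [DecidableEq N] [Fintype K] [DecidableEq K]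
    [Fintype M] [DecidableEq M]
    (C : K → ℝ) (hC : ∀ t, 0 ≤ C t)
    (T : N → Finset K)
    (c : Finset N → ℝ) (hc : ∀ S : Finset N, c S = ∑ t ∈ S.biUnion T, C t)
    (Pp : M → Finset N)
    -- the quotient game
    (cP : Finset M → ℝ) (hcP : ∀ H : Finset M, cP H = c (H.biUnion Pp))
    -- utopia payoffs of the quotient game
    (MU : M → ℝ) (hMU : ∀ b, MU b = cP Finset.univ - cP (Finset.univ.erase b))
    -- lower payoffs of the quotient game
    (mU : M → ℝ)
    (hmU : ∀ b, IsLeast {x : ℝ | ∃ H : Finset M, b ∈ H ∧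
        x = cP H - ∑ b' ∈ H.erase b, MU b'} (mU b))
    -- the Tijs value of the quotient game
    (α : ℝ)
    (heff : ∑ b : M, (mU b + α * (MU b - mU b)) = cP Finset.univ)
    -- exclusive and shared costs at union level
    (cPe cPs : M → ℝ)
    (hcPe : ∀ b, cPe b = ∑ t ∈ ((Pp b).biUnion T).filter
        (fun t => ((Finset.univ : Finset M).filter
          (fun b' => t ∈ (Pp b').biUnion T)).card = 1), C t)
    (hcPs : ∀ b, cPs b = ∑ t ∈ ((Pp b).biUnion T).filter
        (fun t => 1 < ((Finset.univ : Finset M).filter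
          (fun b' => t ∈ (Pp b').biUnion T)).card), C t)
    (KPs : Finset K)
    (hKPs : KPs = Finset.univ.filter
        (fun t => 1 < ((Finset.univ : Finset M).filter
          (fun b' => t ∈ (Pp b').biUnion T)).card))
    (hden : KPs.Nonempty → 0 < ∑ b : M, cPs b) :
    ∀ a : M,
      (KPs = ∅ → mU a + α * (MU a - mU a) = cPe a) ∧
      (KPs.Nonempty → mU a + α * (MU a - mU a)
          = cPe a + (∑ t ∈ KPs, C t) * cPs a / ∑ b : M, cPs b) := by
  set U : M → Finset K := fun b => (Pp b).biUnion T
  obtain rfl : cP = cost C U := funext fun H => by rw [hcP, hc, biUnion_biUnion]; rfl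
  obtain rfl : MU = exclusiveCost C U :=
    funext fun b => (hMU b).trans (cost_univ_sub_cost_erase b)
  obtain rfl : cPe = exclusiveCost C U := funext hcPe
  obtain rfl : cPs = sharedCost C U := funext hcPs
  replace hKPs : KPs = univ.filter (fun t => 1 < usageCount U t) := hKPs
  have hmU_eq : ∀ b, mU b = exclusiveCost C U b + sharedCost C U b :=
    fun b => (hmU b).unique (isLeast_cost_sub_sum_exclusiveCost hC b)
  have hval : ∀ b, mU b + α * (exclusiveCost C U b - mU b)
      = exclusiveCost C U b + (1 - α) * sharedCost C U b := fun b => by rw [hmU_eq]; ring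
  have hshared : (1 - α) * ∑ b, sharedCost C U b = ∑ t ∈ KPs, C t := by
    rw [sum_congr rfl fun b _ => hval b, sum_add_distrib, ← mul_sum, cost_univ_eq, ← hKPs]
      at heff
    linarith
  intro a
  refine ⟨fun hempty => ?_, fun hne => ?_⟩
  · rw [hval, sharedCost_eq_zero (hKPs ▸ hempty), mul_zero, add_zero]
  · rw [hval, ← hshared]
    field_simp [(hden hne).ne']

/-- Tijs value of the quotient game of a generalized highway
problem with a priori unions.  If every section is used by exactly one union,
union `a` receives `c_P^e(a)`; otherwise it receives
`c_P^e(a) + c_P^s(M)·c_P^s(a)/Σ_b c_P^s(b)`. -/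
theorem tijs_value_quotient_generalized_highway
    {N K M : Type*} [Fintype N] [DecidableEq N] [Fintype K] [DecidableEq K]
    [Fintype M] [DecidableEq M]
    (C : K → ℝ) (hC : ∀ t, 0 ≤ C t)
    (T : N → Finset K) (hT : ∀ i, (T i).Nonempty)
    (hK : ∀ t : K, ∃ i, t ∈ T i)
    (c : Finset N → ℝ) (hc : ∀ S : Finset N, c S = ∑ t ∈ S.biUnion T, C t)
    (Pp : M → Finset N)
    (hdis : ∀ a b : M, a ≠ b → Disjoint (Pp a) (Pp b))
    (hcov : ∀ i : N, ∃ a : M, i ∈ Pp a)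
    (hne : ∀ a : M, (Pp a).Nonempty)
    -- the quotient game
    (cP : Finset M → ℝ) (hcP : ∀ H : Finset M, cP H = c (H.biUnion Pp))
    -- utopia payoffs of the quotient game
    (MU : M → ℝ) (hMU : ∀ b, MU b = cP Finset.univ - cP (Finset.univ.erase b))
    -- lower payoffs of the quotient game
    (mU : M → ℝ)
    (hmU : ∀ b, IsLeast {x : ℝ | ∃ H : Finset M, b ∈ H ∧
        x = cP H - ∑ b' ∈ H.erase b, MU b'} (mU b))
    -- the Tijs value of the quotient game
    (α : ℝ) (hα0 : 0 ≤ α) (hα1 : α ≤ 1)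
    (heff : ∑ b : M, (mU b + α * (MU b - mU b)) = cP Finset.univ)
    -- exclusive and shared costs at union level
    (cPe cPs : M → ℝ)
    (hcPe : ∀ b, cPe b = ∑ t ∈ ((Pp b).biUnion T).filter
        (fun t => ((Finset.univ : Finset M).filter
          (fun b' => t ∈ (Pp b').biUnion T)).card = 1), C t)
    (hcPs : ∀ b, cPs b = ∑ t ∈ ((Pp b).biUnion T).filter
        (fun t => 1 < ((Finset.univ : Finset M).filter
          (fun b' => t ∈ (Pp b').biUnion T)).card), C t)
    (KPs : Finset K)
    (hKPs : KPs = Finset.univ.filter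
        (fun t => 1 < ((Finset.univ : Finset M).filter
          (fun b' => t ∈ (Pp b').biUnion T)).card))
    (hden : KPs.Nonempty → 0 < ∑ b : M, cPs b) :
    ∀ a : M,
      (KPs = ∅ → mU a + α * (MU a - mU a) = cPe a) ∧
      (KPs.Nonempty → mU a + α * (MU a - mU a)
          = cPe a + (∑ t ∈ KPs, C t) * cPs a / ∑ b : M, cPs b) :=
  tijs_value_quotient_generalized_highway_general C hC T c hc Pp cP hcP MU hMU mU hmU α heff cPe cPs
    hcPe hcPs KPs hKPs hden
end

section
/- Let (N,K,C,T,P) be a generalized highway problem with a priori unions in which every section is shared (|N_t| > 1 for all t ∈ K). Then for each player i in union P_a, the coalitional Tijs value equals 𝒯_a(N,c,P)·c^s(i)/Σ_{j∈P_a} c^s(j), where 𝒯_a(N,c,P) = τ_a(M,c_P) is the Tijs value of union a in the quotient game and c^s(i) = Σ_{t∈T(i)} C(t). -/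
/-!
When every section is used by at least two players, removing one player does not change the set of
sections that must be paid for, so every utopia payoff `M_i` vanishes. The minimal right then
reduces to the stand-alone cost `c^s(i)`: the coalition `{i}` attains it, and any coalition
containing `i` costs at least that much. Inside a union the coalitional Tijs value is thus
`(1 - α_a) c^s(i)`, and the normalization `Σ_{j ∈ P_a} (1 - α_a) c^s(j) = τ_a` fixes the factor
`1 - α_a = τ_a / Σ_{j ∈ P_a} c^s(j)`.
-/

open Finset

section HighwayCost

variable {N K : Type*} [DecidableEq K] (C : K → ℝ) (T : N → Finset K)

def highwayCost (S : Finset N) : ℝ := ∑ t ∈ S.biUnion T, C t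

lemma highwayCost_singleton (i : N) : highwayCost C T {i} = ∑ t ∈ T i, C t := by
  rw [highwayCost, singleton_biUnion]

variable {C}

lemma highwayCost_mono (hC : ∀ t, 0 ≤ C t) : Monotone (highwayCost C T) := fun _ _ hS =>
  sum_le_sum_of_subset_of_nonneg (biUnion_subset_biUnion_of_subset_left T hS) fun t _ _ => hC t

variable (C) {T}

lemma highwayCost_erase_of_shared [DecidableEq N] {S : Finset N} {i : N}
    (hshared : ∀ t ∈ T i, ∃ j ∈ S, j ≠ i ∧ t ∈ T j) :
    highwayCost C T (S.erase i) = highwayCost C T S := by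
  refine congrArg (∑ t ∈ ·, C t) (Subset.antisymm ?_ fun t ht => ?_)
  · exact biUnion_subset_biUnion_of_subset_left T (erase_subset i S)
  · obtain ⟨j, hjS, hjT⟩ := mem_biUnion.mp ht
    by_cases hji : j = i
    · obtain ⟨k, hkS, hki, hkT⟩ := hshared t (hji ▸ hjT)
      exact mem_biUnion.mpr ⟨k, mem_erase.mpr ⟨hki, hkS⟩, hkT⟩
    · exact mem_biUnion.mpr ⟨j, mem_erase.mpr ⟨hji, hjS⟩, hjT⟩

lemma highwayCost_univ_erase_of_one_lt_card [Fintype N] [DecidableEq N]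
    (hshared : ∀ t : K, 1 < (univ.filter fun j => t ∈ T j).card) (i : N) :
    highwayCost C T (univ.erase i) = highwayCost C T univ := by
  refine highwayCost_erase_of_shared C fun t _ => ?_
  obtain ⟨j, hj, hji⟩ := (one_lt_card_iff_nontrivial.mp (hshared t)).exists_ne i
  exact ⟨j, mem_univ j, hji, (mem_filter.mp hj).2⟩

end HighwayCost

lemma mul_eq_mul_div_sum_of_sum_mul_eq {ι : Type*} {P : Finset ι} {s : ι → ℝ} {k τ : ℝ}
    (hP : ∑ j ∈ P, s j ≠ 0) (h : ∑ j ∈ P, k * s j = τ) (i : ι) :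
    k * s i = τ * s i / ∑ j ∈ P, s j := by
  rw [← h, ← mul_sum]
  field_simp

lemma minimalRight_eq_standalone {N K M : Type*} [Fintype N] [DecidableEq N] [DecidableEq K]
    {C : K → ℝ} (hC : ∀ t, 0 ≤ C t) {T : N → Finset K} {Pp : M → Finset N} {part : N → M}
    {Mv : N → ℝ} (hMv : ∀ j, Mv j = 0) {i : N} (hi : i ∈ Pp (part i)) {x : ℝ}
    (hx : IsLeast {x : ℝ | ∃ (L : Finset M) (T' : Finset N),
        part i ∉ L ∧ T' ⊆ Pp (part i) ∧ i ∈ T' ∧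
        x = highwayCost C T (L.biUnion Pp ∪ T') - ∑ j ∈ (L.biUnion Pp ∪ T').erase i, Mv j} x) :
    x = ∑ t ∈ T i, C t := by
  simp only [hMv, sum_const_zero, sub_zero] at hx
  refine le_antisymm (hx.2 ⟨∅, {i}, notMem_empty _, singleton_subset_iff.mpr hi,
    mem_singleton_self i, by simp [highwayCost_singleton]⟩) ?_
  obtain ⟨L, T', -, -, hiT', rfl⟩ := hx.1
  rw [← highwayCost_singleton]
  exact highwayCost_mono T hC (singleton_subset_iff.mpr (mem_union_right _ hiT'))

theorem coalitional_tijs_all_shared_general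
    {N K M : Type*} [Fintype N] [DecidableEq N] [DecidableEq K]
    (C : K → ℝ) (hC : ∀ t, 0 ≤ C t)
    (T : N → Finset K)
    (c : Finset N → ℝ) (hc : ∀ S : Finset N, c S = ∑ t ∈ S.biUnion T, C t)
    (Pp : M → Finset N)
    (part : N → M) (hpart : ∀ i : N, i ∈ Pp (part i))
    -- the quotient game and its Tijs value
    (τU : M → ℝ)
    -- player-level utopia and lower payoffs (minimum over coalitions in `P(a)`)
    (Mv : N → ℝ) (hMv : ∀ i, Mv i = c Finset.univ - c (Finset.univ.erase i))
    (m : N → ℝ)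
    (hm : ∀ i, IsLeast {x : ℝ | ∃ (L : Finset M) (T' : Finset N),
        part i ∉ L ∧ T' ⊆ Pp (part i) ∧ i ∈ T' ∧
        x = c (L.biUnion Pp ∪ T') - ∑ j ∈ (L.biUnion Pp ∪ T').erase i, Mv j} (m i))
    -- within-union normalizing constants
    (α : M → ℝ)
    (hnorm : ∀ a : M, ∑ i ∈ Pp a, (m i + α a * (Mv i - m i)) = τU a)
    -- hypotheses: every section is shared, and denominators are positive
    (hshared : ∀ t : K, 1 < ((Finset.univ : Finset N).filter (fun j => t ∈ T j)).card)
    (hden : ∀ a : M, 0 < ∑ j ∈ Pp a, ∑ t ∈ T j, C t) :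
    ∀ i : N, m i + α (part i) * (Mv i - m i)
      = τU (part i) * (∑ t ∈ T i, C t) / ∑ j ∈ Pp (part i), ∑ t ∈ T j, C t := by
  obtain rfl : c = highwayCost C T := funext hc
  have hMv0 : ∀ j, Mv j = 0 := fun j => by
    rw [hMv, highwayCost_univ_erase_of_one_lt_card C hshared, sub_self]
  have hm_eq : ∀ j, m j = ∑ t ∈ T j, C t := fun j =>
    minimalRight_eq_standalone hC hMv0 (hpart j) (hm j)
  have hpayoff : ∀ a j, m j + α a * (Mv j - m j) = (1 - α a) * ∑ t ∈ T j, C t := fun a j => by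
    rw [hMv0, hm_eq]
    ring
  intro i
  rw [hpayoff]
  refine mul_eq_mul_div_sum_of_sum_mul_eq (hden _).ne' ?_ i
  simp only [← hpayoff, hnorm]

/-- If every section of a generalized highway problem with a
priori unions is shared (`|N_t| > 1` for all `t`), then the coalitional Tijs
value of player `i ∈ P_a` equals `τ_a(M,c_P)·c^s(i)/Σ_{j∈P_a} c^s(j)`,
where here `c^s(i) = Σ_{t∈T(i)} C(t)`. -/
theorem coalitional_tijs_all_shared
    {N K M : Type*} [Fintype N] [DecidableEq N] [Fintype K] [DecidableEq K]
    [Fintype M] [DecidableEq M]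
    (C : K → ℝ) (hC : ∀ t, 0 ≤ C t)
    (T : N → Finset K) (hT : ∀ i, (T i).Nonempty)
    (hK : ∀ t : K, ∃ i, t ∈ T i)
    (c : Finset N → ℝ) (hc : ∀ S : Finset N, c S = ∑ t ∈ S.biUnion T, C t)
    (Pp : M → Finset N)
    (hdis : ∀ a b : M, a ≠ b → Disjoint (Pp a) (Pp b))
    (hne : ∀ a : M, (Pp a).Nonempty)
    (part : N → M) (hpart : ∀ i : N, i ∈ Pp (part i))
    -- the quotient game and its Tijs value
    (cP : Finset M → ℝ) (hcP : ∀ H : Finset M, cP H = c (H.biUnion Pp))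
    (MU : M → ℝ) (hMU : ∀ b, MU b = cP Finset.univ - cP (Finset.univ.erase b))
    (mU : M → ℝ)
    (hmU : ∀ b, IsLeast {x : ℝ | ∃ H : Finset M, b ∈ H ∧
        x = cP H - ∑ b' ∈ H.erase b, MU b'} (mU b))
    (β : ℝ) (hβ0 : 0 ≤ β) (hβ1 : β ≤ 1)
    (τU : M → ℝ) (hτU : ∀ b, τU b = mU b + β * (MU b - mU b))
    (heffU : ∑ b : M, τU b = cP Finset.univ)
    -- player-level utopia and lower payoffs (minimum over coalitions in `P(a)`)
    (Mv : N → ℝ) (hMv : ∀ i, Mv i = c Finset.univ - c (Finset.univ.erase i))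
    (m : N → ℝ)
    (hm : ∀ i, IsLeast {x : ℝ | ∃ (L : Finset M) (T' : Finset N),
        part i ∉ L ∧ T' ⊆ Pp (part i) ∧ i ∈ T' ∧
        x = c (L.biUnion Pp ∪ T') - ∑ j ∈ (L.biUnion Pp ∪ T').erase i, Mv j} (m i))
    -- within-union normalizing constants
    (α : M → ℝ) (hα0 : ∀ a, 0 ≤ α a) (hα1 : ∀ a, α a ≤ 1)
    (hnorm : ∀ a : M, ∑ i ∈ Pp a, (m i + α a * (Mv i - m i)) = τU a)
    -- hypotheses: every section is shared, and denominators are positive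
    (hshared : ∀ t : K, 1 < ((Finset.univ : Finset N).filter (fun j => t ∈ T j)).card)
    (hden : ∀ a : M, 0 < ∑ j ∈ Pp a, ∑ t ∈ T j, C t) :
    ∀ i : N, m i + α (part i) * (Mv i - m i)
      = τU (part i) * (∑ t ∈ T i, C t) / ∑ j ∈ Pp (part i), ∑ t ∈ T j, C t :=
  coalitional_tijs_all_shared_general C hC T c hc Pp part hpart τU Mv hMv m hm α hnorm hshared hden
end

section
/- Uniqueness part of the Owen characterization: if a solution σ on generalized highway problems with a coalitional structure satisfies Pareto optimality, equal treatment of agents within unions, equal treatment of unions, and individual independence of outside changes, then σ coincides with the Owen value, i.e., σ_i(Γ,P) = Σ_{t∈T(i)} C(t)/(|𝒜_t|·|N_t^a|) for every player i ∈ P_a. -/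
open Finset

/-- A generalized highway problem with a coalitional structure: agents drawn
from `𝒩`, sections from `𝒦`, union labels from `ℳ`.  `N` is the (finite) agent
set, `K` the section set, `C` the section costs, `T i` the sections used by
agent `i`, `M` the set of (nonempty) a priori unions and `u i` the union label
of agent `i`. -/
structure GHP (𝒩 𝒦 ℳ : Type*) where
  N : Finset 𝒩
  K : Finset 𝒦
  C : 𝒦 → ℝ
  T : 𝒩 → Finset 𝒦
  M : Finset ℳ
  u : 𝒩 → Option ℳ

namespace GHP

variable {𝒩 𝒦 ℳ : Type*} [DecidableEq 𝒩] [DecidableEq 𝒦] [DecidableEq ℳ]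

/-- The members of the a priori union labelled `a`. -/
def part (Γ : GHP 𝒩 𝒦 ℳ) (a : ℳ) : Finset 𝒩 :=
  Γ.N.filter (fun i => Γ.u i = some a)

/-- Validity of a generalized highway problem with a coalitional structure. -/
def Valid (Γ : GHP 𝒩 𝒦 ℳ) : Prop :=
  (∀ i ∈ Γ.N, (Γ.T i).Nonempty ∧ Γ.T i ⊆ Γ.K) ∧
  (∀ i, i ∉ Γ.N → Γ.T i = ∅) ∧
  (∀ t ∈ Γ.K, ∃ i ∈ Γ.N, t ∈ Γ.T i) ∧
  (∀ t, 0 ≤ Γ.C t) ∧ (∀ t, t ∉ Γ.K → Γ.C t = 0) ∧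
  (∀ i ∈ Γ.N, ∃ a ∈ Γ.M, Γ.u i = some a) ∧
  (∀ i, i ∉ Γ.N → Γ.u i = none) ∧
  (∀ a ∈ Γ.M, (Γ.part a).Nonempty)

/-- Restriction of a problem (and its partition) to a set of sections `K'`. -/
def restrict (Γ : GHP 𝒩 𝒦 ℳ) (K' : Finset 𝒦) : GHP 𝒩 𝒦 ℳ where
  N := Γ.N.filter (fun i => (Γ.T i ∩ K').Nonempty)
  K := K'
  C := fun t => if t ∈ K' then Γ.C t else 0
  T := fun i => if (Γ.T i ∩ K').Nonempty then Γ.T i ∩ K' else ∅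
  M := Γ.M.filter (fun a =>
    ((Γ.N.filter (fun i => (Γ.T i ∩ K').Nonempty)).filter
      (fun i => Γ.u i = some a)).Nonempty)
  u := fun i => if i ∈ Γ.N.filter (fun i => (Γ.T i ∩ K').Nonempty) then Γ.u i else none

/-- The sections used by union `a`. -/
def unionSections (Γ : GHP 𝒩 𝒦 ℳ) (a : ℳ) : Finset 𝒦 := (Γ.part a).biUnion Γ.T

/-- The set of unions using section `t`. -/
def usingUnions (Γ : GHP 𝒩 𝒦 ℳ) (t : 𝒦) : Finset ℳ :=
  Γ.M.filter (fun a => t ∈ Γ.unionSections a)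

/-- The set of agents using section `t`. -/
def usingAgents (Γ : GHP 𝒩 𝒦 ℳ) (t : 𝒦) : Finset 𝒩 :=
  Γ.N.filter (fun i => t ∈ Γ.T i)

/-- The members of `i`'s own union that use section `t`. -/
def usingMates (Γ : GHP 𝒩 𝒦 ℳ) (i : 𝒩) (t : 𝒦) : Finset 𝒩 :=
  (Γ.N.filter (fun j => Γ.u j = Γ.u i)).filter (fun j => t ∈ Γ.T j)

/-- The Owen value of a generalized highway problem with a coalitional
structure, in its explicit form `Ψ_i = Σ_{t∈T(i)} C(t)/(|𝒜_t|·|N_t^a|)`. -/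
noncomputable def owen (Γ : GHP 𝒩 𝒦 ℳ) (i : 𝒩) : ℝ :=
  ∑ t ∈ Γ.T i, Γ.C t / (((Γ.usingUnions t).card : ℝ) * ((Γ.usingMates i t).card : ℝ))

end GHP

open GHP

/-! Induction on the number of sections. By (IIOC), an agent `j` with `T j ⊊ K` is paid what it
is paid in the restriction of the problem to `T j`, which has fewer sections; the Owen value is
unchanged by this restriction, so the induction hypothesis settles `j`. All members of a union not
using every section are of this kind, so (PO) fixes the total paid to the unions using all of `K`,
and (ETPU) makes these totals equal. Within such a union, the members with `T i = K` share what
is left equally by (ETPA). The Owen value obeys the same relations (it is efficient, and the total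
of a union depends only on the sections it uses), so the two agree everywhere. -/

theorem Finset.eq_of_sum_eq_of_const_on {ι M : Type*} [AddCancelCommMonoid M] [IsAddTorsionFree M]
    {s : Finset ι} (p : ι → Prop) [DecidablePred p] {f g : ι → M}
    (hsum : ∑ i ∈ s, f i = ∑ i ∈ s, g i) (hnot : ∀ i ∈ s, ¬ p i → f i = g i)
    (hf : ∀ i ∈ s, ∀ j ∈ s, p i → p j → f i = f j) (hg : ∀ i ∈ s, ∀ j ∈ s, p i → p j → g i = g j)
    {i : ι} (hi : i ∈ s) (hpi : p i) : f i = g i := by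
  rw [← sum_filter_add_sum_filter_not s p f, ← sum_filter_add_sum_filter_not s p g,
    sum_congr rfl fun j hj => hnot j (mem_filter.1 hj).1 (mem_filter.1 hj).2] at hsum
  have hsum_p := add_right_cancel hsum
  rw [sum_congr rfl fun j hj => hf j (mem_filter.1 hj).1 i hi (mem_filter.1 hj).2 hpi,
    sum_congr rfl fun j hj => hg j (mem_filter.1 hj).1 i hi (mem_filter.1 hj).2 hpi,
    sum_const, sum_const] at hsum_p
  exact nsmul_right_injective (card_ne_zero_of_mem (mem_filter.2 ⟨hi, hpi⟩)) hsum_p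

theorem Finset.sum_div_card {ι R : Type*} [Semifield R] [CharZero R] {s : Finset ι}
    (hs : s.Nonempty) (c : R) :
    ∑ _ ∈ s, c / (#s : R) = c := by
  rw [sum_const, nsmul_eq_mul, mul_div_cancel₀ _ (by exact_mod_cast hs.card_ne_zero)]

attribute [ext] GHP

namespace GHP

variable {𝒩 𝒦 ℳ : Type*} [DecidableEq ℳ] {Γ : GHP 𝒩 𝒦 ℳ} {K' : Finset 𝒦} {a : ℳ} {i j : 𝒩}
  {t : 𝒦}

theorem mem_part : i ∈ Γ.part a ↔ i ∈ Γ.N ∧ Γ.u i = some a := mem_filter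

theorem Valid.T_nonempty (hV : Γ.Valid) (hi : i ∈ Γ.N) : (Γ.T i).Nonempty := (hV.1 i hi).1

theorem Valid.T_subset (hV : Γ.Valid) (hi : i ∈ Γ.N) : Γ.T i ⊆ Γ.K := (hV.1 i hi).2

theorem Valid.exists_user (hV : Γ.Valid) (ht : t ∈ Γ.K) : ∃ i ∈ Γ.N, t ∈ Γ.T i := hV.2.2.1 t ht

theorem Valid.exists_union (hV : Γ.Valid) (hi : i ∈ Γ.N) : ∃ a ∈ Γ.M, Γ.u i = some a :=
  hV.2.2.2.2.2.1 i hi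

theorem Valid.sum_eq_sum_part {M : Type*} [AddCommMonoid M] (hV : Γ.Valid) (f : 𝒩 → M) :
    ∑ j ∈ Γ.N, f j = ∑ b ∈ Γ.M, ∑ j ∈ Γ.part b, f j := by
  have hmaps : ∀ j ∈ Γ.N, Γ.u j ∈ Γ.M.map Function.Embedding.some := fun j hj => by
    obtain ⟨a, ha, hja⟩ := hV.exists_union hj
    exact hja ▸ mem_map_of_mem _ ha
  rw [← sum_fiberwise_of_maps_to hmaps, sum_map]
  rfl

variable [DecidableEq 𝒦]

theorem T_subset_unionSections (hi : i ∈ Γ.part a) : Γ.T i ⊆ Γ.unionSections a :=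
  subset_biUnion_of_mem Γ.T hi

theorem mem_unionSections : t ∈ Γ.unionSections a ↔ ∃ j ∈ Γ.part a, t ∈ Γ.T j := mem_biUnion

theorem mem_usingUnions : a ∈ Γ.usingUnions t ↔ a ∈ Γ.M ∧ t ∈ Γ.unionSections a := mem_filter

theorem usingMates_eq_filter_part (hi : Γ.u i = some a) (t : 𝒦) :
    Γ.usingMates i t = (Γ.part a).filter (fun j => t ∈ Γ.T j) := by
  simp only [usingMates, part, hi]

theorem owen_congr (hu : Γ.u i = Γ.u j) (hT : Γ.T i = Γ.T j) : Γ.owen i = Γ.owen j := by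
  simp only [owen, usingMates, hu, hT]

theorem Valid.unionSections_subset (hV : Γ.Valid) (a : ℳ) : Γ.unionSections a ⊆ Γ.K :=
  biUnion_subset.2 fun _ hj => hV.T_subset (mem_part.1 hj).1

theorem Valid.usingUnions_nonempty (hV : Γ.Valid) (ht : t ∈ Γ.K) :
    (Γ.usingUnions t).Nonempty := by
  obtain ⟨j, hj, hjt⟩ := hV.exists_user ht
  obtain ⟨a, ha, hja⟩ := hV.exists_union hj
  exact ⟨a, mem_usingUnions.2 ⟨ha, mem_unionSections.2 ⟨j, mem_part.2 ⟨hj, hja⟩, hjt⟩⟩⟩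

theorem sum_owen_part (a : ℳ) :
    ∑ j ∈ Γ.part a, Γ.owen j = ∑ t ∈ Γ.unionSections a, Γ.C t / (#(Γ.usingUnions t) : ℝ) := by
  calc ∑ j ∈ Γ.part a, Γ.owen j
      = ∑ j ∈ Γ.part a, ∑ t ∈ Γ.T j, Γ.C t / (#(Γ.usingUnions t) : ℝ) /
          (#((Γ.part a).filter (fun k => t ∈ Γ.T k)) : ℝ) :=
        sum_congr rfl fun j hj => by
          simp only [owen, usingMates_eq_filter_part (mem_part.1 hj).2, div_div]
    _ = ∑ t ∈ Γ.unionSections a, ∑ j ∈ (Γ.part a).filter (fun k => t ∈ Γ.T k),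
          Γ.C t / (#(Γ.usingUnions t) : ℝ) / (#((Γ.part a).filter (fun k => t ∈ Γ.T k)) : ℝ) :=
        sum_comm' fun j t => ⟨fun ⟨hj, ht⟩ => ⟨mem_filter.2 ⟨hj, ht⟩, T_subset_unionSections hj ht⟩,
          fun ⟨hj, _⟩ => mem_filter.1 hj⟩
    _ = ∑ t ∈ Γ.unionSections a, Γ.C t / (#(Γ.usingUnions t) : ℝ) :=
        sum_congr rfl fun t ht => sum_div_card (by
          obtain ⟨j, hj, hjt⟩ := mem_unionSections.1 ht
          exact ⟨j, mem_filter.2 ⟨hj, hjt⟩⟩) _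

theorem Valid.sum_owen (hV : Γ.Valid) : ∑ j ∈ Γ.N, Γ.owen j = ∑ t ∈ Γ.K, Γ.C t := by
  calc ∑ j ∈ Γ.N, Γ.owen j
      = ∑ b ∈ Γ.M, ∑ t ∈ Γ.unionSections b, Γ.C t / (#(Γ.usingUnions t) : ℝ) := by
        simp only [hV.sum_eq_sum_part, sum_owen_part]
    _ = ∑ t ∈ Γ.K, ∑ _ ∈ Γ.usingUnions t, Γ.C t / (#(Γ.usingUnions t) : ℝ) :=
        sum_comm' fun b t => ⟨fun ⟨hb, ht⟩ => ⟨mem_usingUnions.2 ⟨hb, ht⟩,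
          hV.unionSections_subset b ht⟩, fun ⟨hb, _⟩ => mem_usingUnions.1 hb⟩
    _ = ∑ t ∈ Γ.K, Γ.C t := sum_congr rfl fun t ht => sum_div_card (hV.usingUnions_nonempty ht) _

theorem Valid.unionSections_eq_K_of_T_eq_K (hV : Γ.Valid) (hi : i ∈ Γ.part a) (hT : Γ.T i = Γ.K) :
    Γ.unionSections a = Γ.K :=
  (hV.unionSections_subset a).antisymm (hT ▸ T_subset_unionSections hi)

theorem Valid.eq_owen_of_eq_owen_of_T_ne_K (hV : Γ.Valid) {x : 𝒩 → ℝ}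
    (hPO : ∑ i ∈ Γ.N, x i = ∑ t ∈ Γ.K, Γ.C t)
    (hETPA : ∀ a ∈ Γ.M, ∀ i ∈ Γ.part a, ∀ j ∈ Γ.part a, Γ.T i = Γ.T j → x i = x j)
    (hETPU : ∀ a ∈ Γ.M, ∀ b ∈ Γ.M, Γ.unionSections a = Γ.unionSections b →
      ∑ i ∈ Γ.part a, x i = ∑ i ∈ Γ.part b, x i)
    (hproper : ∀ j ∈ Γ.N, Γ.T j ≠ Γ.K → x j = Γ.owen j) (hi : i ∈ Γ.N) : x i = Γ.owen i := by
  by_cases hT : Γ.T i = Γ.K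
  swap
  · exact hproper i hi hT
  obtain ⟨a, ha, hua⟩ := hV.exists_union hi
  have hia : i ∈ Γ.part a := mem_part.2 ⟨hi, hua⟩
  have hunion : ∑ j ∈ Γ.part a, x j = ∑ j ∈ Γ.part a, Γ.owen j := by
    refine eq_of_sum_eq_of_const_on (fun b => Γ.unionSections b = Γ.K)
      (by rw [← hV.sum_eq_sum_part, ← hV.sum_eq_sum_part, hPO, hV.sum_owen])
      (fun b _ hb => sum_congr rfl fun j hj => hproper j (mem_part.1 hj).1 fun hjT =>
        hb (hV.unionSections_eq_K_of_T_eq_K hj hjT))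
      (fun b hb c hc hbK hcK => hETPU b hb c hc (hbK.trans hcK.symm))
      (fun b _ c _ hbK hcK => by rw [sum_owen_part, sum_owen_part, hbK, hcK])
      ha (hV.unionSections_eq_K_of_T_eq_K hia hT)
  exact eq_of_sum_eq_of_const_on (fun j => Γ.T j = Γ.K) hunion
    (fun j hj hjT => hproper j (mem_part.1 hj).1 hjT)
    (fun j hj k hk hjT hkT => hETPA a ha j hj k hk (hjT.trans hkT.symm))
    (fun j hj k hk hjT hkT => owen_congr (by rw [(mem_part.1 hj).2, (mem_part.1 hk).2])
      (hjT.trans hkT.symm))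
    hia hT

variable [DecidableEq 𝒩]

theorem mem_restrict_N : j ∈ (Γ.restrict K').N ↔ j ∈ Γ.N ∧ (Γ.T j ∩ K').Nonempty := mem_filter

theorem mem_restrict_N_of_mem_T (hj : j ∈ Γ.N) (ht : t ∈ Γ.T j) (htK : t ∈ K') :
    j ∈ (Γ.restrict K').N :=
  mem_restrict_N.2 ⟨hj, t, mem_inter.2 ⟨ht, htK⟩⟩

theorem Valid.mem_restrict_T_self (hV : Γ.Valid) (hi : i ∈ Γ.N) : i ∈ (Γ.restrict (Γ.T i)).N :=
  mem_restrict_N.2 ⟨hi, by rw [inter_self]; exact hV.T_nonempty hi⟩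

theorem restrict_T : (Γ.restrict K').T j = Γ.T j ∩ K' := by
  dsimp only [restrict]
  split_ifs with h
  · rfl
  · exact (not_nonempty_iff_eq_empty.1 h).symm

theorem restrict_C_of_mem (ht : t ∈ K') : (Γ.restrict K').C t = Γ.C t := if_pos ht

theorem restrict_u : (Γ.restrict K').u j = if j ∈ (Γ.restrict K').N then Γ.u j else none := rfl

theorem restrict_part : (Γ.restrict K').part a = (Γ.restrict K').N.filter (Γ.u · = some a) := by
  refine filter_congr fun j hj => ?_
  rw [restrict_u, if_pos hj]

theorem mem_restrict_M : a ∈ (Γ.restrict K').M ↔ a ∈ Γ.M ∧ ((Γ.restrict K').part a).Nonempty := by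
  rw [restrict_part]
  exact mem_filter

theorem restrict_restrict_self (Γ : GHP 𝒩 𝒦 ℳ) (K' : Finset 𝒦) :
    (Γ.restrict K').restrict K' = Γ.restrict K' := by
  have hT : ∀ j, (Γ.restrict K').T j ∩ K' = Γ.T j ∩ K' := fun j => by
    rw [restrict_T, inter_assoc, inter_self]
  have hN : ((Γ.restrict K').restrict K').N = (Γ.restrict K').N := by
    ext j
    simp only [mem_restrict_N, hT]
    tauto
  have hu : ((Γ.restrict K').restrict K').u = (Γ.restrict K').u := by
    funext j
    rw [restrict_u, hN, restrict_u]
    split_ifs <;> rfl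
  ext1
  · exact hN
  · rfl
  · funext t
    dsimp only [restrict]
    split_ifs <;> rfl
  · funext j
    simp only [restrict_T, inter_assoc, inter_self]
  · ext a
    simp only [mem_restrict_M, part, hN, hu]
    tauto
  · exact hu

theorem Valid.restrict (hV : Γ.Valid) (hK' : K' ⊆ Γ.K) : (Γ.restrict K').Valid := by
  refine ⟨fun j hj => ?_, fun j hj => ?_, fun t ht => ?_, fun t => ?_, fun t ht => if_neg ht,
    fun j hj => ?_, fun j hj => if_neg hj, fun a ha => (mem_restrict_M.1 ha).2⟩
  · rw [restrict_T]
    exact ⟨(mem_restrict_N.1 hj).2, inter_subset_right⟩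
  · rw [restrict_T, ← not_nonempty_iff_eq_empty]
    by_cases hjN : j ∈ Γ.N
    · exact fun h => hj (mem_restrict_N.2 ⟨hjN, h⟩)
    · rw [hV.2.1 j hjN, empty_inter]
      exact not_nonempty_empty
  · obtain ⟨j, hj, hjt⟩ := hV.exists_user (hK' ht)
    exact ⟨j, mem_restrict_N_of_mem_T hj hjt ht, by rw [restrict_T]; exact mem_inter.2 ⟨hjt, ht⟩⟩
  · dsimp only [GHP.restrict]
    split_ifs
    exacts [hV.2.2.2.1 t, le_rfl]
  · obtain ⟨a, ha, hja⟩ := hV.exists_union (mem_restrict_N.1 hj).1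
    refine ⟨a, mem_restrict_M.2 ⟨ha, j, ?_⟩, by rw [restrict_u, if_pos hj, hja]⟩
    rw [restrict_part]
    exact mem_filter.2 ⟨hj, hja⟩

theorem restrict_usingUnions (ht : t ∈ K') : (Γ.restrict K').usingUnions t = Γ.usingUnions t := by
  ext a
  simp only [mem_usingUnions, mem_unionSections, mem_restrict_M, restrict_part, mem_filter,
    restrict_T, mem_inter, and_iff_left ht, mem_part]
  constructor
  · rintro ⟨⟨ha, -⟩, j, ⟨hj, hja⟩, hjt⟩
    exact ⟨ha, j, ⟨(mem_restrict_N.1 hj).1, hja⟩, hjt⟩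
  · rintro ⟨ha, j, ⟨hj, hja⟩, hjt⟩
    have hj' := mem_restrict_N_of_mem_T hj hjt ht
    exact ⟨⟨ha, j, mem_filter.2 ⟨hj', hja⟩⟩, j, ⟨hj', hja⟩, hjt⟩

theorem restrict_usingMates (hi : i ∈ (Γ.restrict K').N) (ht : t ∈ K') :
    (Γ.restrict K').usingMates i t = Γ.usingMates i t := by
  ext j
  simp only [usingMates, mem_filter, restrict_T, mem_inter, restrict_u, if_pos hi, and_iff_left ht]
  constructor
  · rintro ⟨⟨hj, hju⟩, hjt⟩
    rw [if_pos hj] at hju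
    exact ⟨⟨(mem_restrict_N.1 hj).1, hju⟩, hjt⟩
  · rintro ⟨⟨hj, hju⟩, hjt⟩
    have hj' := mem_restrict_N_of_mem_T hj hjt ht
    exact ⟨⟨hj', by rwa [if_pos hj']⟩, hjt⟩

theorem owen_restrict (hi : i ∈ Γ.N) (hT : Γ.T i ⊆ K') : (Γ.restrict K').owen i = Γ.owen i := by
  rw [owen, restrict_T, inter_eq_left.2 hT]
  refine sum_congr rfl fun t ht => ?_
  rw [restrict_usingUnions (hT ht), restrict_usingMates (mem_restrict_N_of_mem_T hi ht (hT ht))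
    (hT ht), restrict_C_of_mem (hT ht)]

end GHP

/-- uniqueness part of the Owen characterization: any solution
on generalized highway problems with a coalitional structure satisfying (PO),
(ETPA), (ETPU) and (IIOC) coincides with the Owen value
`σ_i(Γ,P) = Σ_{t∈T(i)} C(t)/(|𝒜_t|·|N_t^a|)`. -/
theorem owen_uniqueness
    {𝒩 𝒦 ℳ : Type*} [DecidableEq 𝒩] [DecidableEq 𝒦] [DecidableEq ℳ]
    (σ : GHP 𝒩 𝒦 ℳ → 𝒩 → ℝ)
    -- (PO)
    (hPO : ∀ Γ : GHP 𝒩 𝒦 ℳ, Γ.Valid → ∑ i ∈ Γ.N, σ Γ i = ∑ t ∈ Γ.K, Γ.C t)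
    -- (ETPA)
    (hETPA : ∀ Γ : GHP 𝒩 𝒦 ℳ, Γ.Valid → ∀ a ∈ Γ.M, ∀ i ∈ Γ.part a, ∀ j ∈ Γ.part a,
      Γ.T i = Γ.T j → σ Γ i = σ Γ j)
    -- (ETPU)
    (hETPU : ∀ Γ : GHP 𝒩 𝒦 ℳ, Γ.Valid → ∀ a ∈ Γ.M, ∀ b ∈ Γ.M,
      Γ.unionSections a = Γ.unionSections b →
      ∑ i ∈ Γ.part a, σ Γ i = ∑ i ∈ Γ.part b, σ Γ i)
    -- (IIOC)
    (hIIOC : ∀ Γ Γ' : GHP 𝒩 𝒦 ℳ, Γ.Valid → Γ'.Valid → ∀ i, i ∈ Γ.N → i ∈ Γ'.N →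
      Γ.restrict (Γ.T i) = Γ'.restrict (Γ'.T i) → σ Γ i = σ Γ' i) :
    ∀ Γ : GHP 𝒩 𝒦 ℳ, Γ.Valid → ∀ a ∈ Γ.M, ∀ i ∈ Γ.part a,
      σ Γ i = ∑ t ∈ Γ.T i, Γ.C t /
        (((Γ.usingUnions t).card : ℝ) * ((Γ.usingMates i t).card : ℝ)) := by
  suffices h : ∀ n, ∀ Γ : GHP 𝒩 𝒦 ℳ, #Γ.K = n → Γ.Valid → ∀ i ∈ Γ.N, σ Γ i = Γ.owen i from
    fun Γ hV _ _ i hi => h _ Γ rfl hV i (mem_part.1 hi).1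
  intro n
  induction n using Nat.strong_induction_on with
  | _ n ih =>
  rintro Γ rfl hV i hi
  refine hV.eq_owen_of_eq_owen_of_T_ne_K (hPO Γ hV) (hETPA Γ hV) (hETPU Γ hV)
    (fun j hj hT => ?_) hi
  have hVj := hV.restrict (hV.T_subset hj)
  have hjN := hV.mem_restrict_T_self hj
  have hlt : #(Γ.restrict (Γ.T j)).K < #Γ.K := card_lt_card ((hV.T_subset hj).ssubset_of_ne hT)
  calc σ Γ j = σ (Γ.restrict (Γ.T j)) j :=
        hIIOC _ _ hV hVj j hj hjN (by rw [restrict_T, inter_self, restrict_restrict_self])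
    _ = (Γ.restrict (Γ.T j)).owen j := ih _ hlt _ rfl hVj j hjN
    _ = Γ.owen j := owen_restrict hj subset_rfl
end
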